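/- arXiv:1805.10084 — 2 statements merged into one kernel-verified Lean document; each statement's English description precedes it below -/
import Mathlib

section
/- For every integer k ≥ 1, the radio number of the middle graph M(P_{2k}) of the path P_{2k} is at least 4k² − 1, and for every integer k ≥ 1, the radio number of the middle graph M(P_{2k+1}) of the path P_{2k+1} is at least 4k(k+1). -/
/-- The middle graph `M(P n)` of the path `P n`: vertices are
`v 1, …, v n` (encoded as even indices `0, 2, …, 2n-2`) together with
`v' 1, …, v' (n-1)` (encoded as odd indices `1, 3, …, 2n-3`), where
`v' i` corresponds to the edge `e i = v i v (i+1)`.  Two vertices are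
adjacent iff their indices differ by `1` (i.e. `v' i` is adjacent to
`v i` and `v (i+1)`), or they are both odd and differ by `2`
(i.e. `v' i` is adjacent to `v' (i+1)`). -/
def middlePath (n : ℕ) : SimpleGraph (Fin (2 * n - 1)) where
  Adj a b := ((a : ℕ) + 1 = (b : ℕ) ∨ (b : ℕ) + 1 = (a : ℕ)) ∨
    ((a : ℕ) % 2 = 1 ∧ (b : ℕ) % 2 = 1 ∧
      ((a : ℕ) + 2 = (b : ℕ) ∨ (b : ℕ) + 2 = (a : ℕ)))
  symm := ⟨by intro a b h; tauto⟩
  loopless := ⟨by intro a h; rcases h with (h | h) | ⟨-, -, h | h⟩ <;> omega⟩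

/-- `φ` is a radio labeling of `G`: distinct vertices `u, v` satisfy
`|φ u - φ v| ≥ diam G + 1 - d(u, v)`. -/
def IsRadioLabeling {V : Type*} (G : SimpleGraph V) (φ : V → ℕ) : Prop :=
  ∀ u v : V, u ≠ v → (G.diam : ℤ) + 1 ≤ (G.dist u v : ℤ) + |(φ u : ℤ) - (φ v : ℤ)|

/-- The span of a labeling `φ`: the maximum of `|φ u - φ v|` over all pairs. -/
def labelSpan {V : Type*} [Fintype V] (φ : V → ℕ) : ℕ :=
  Finset.univ.sup fun p : V × V => ((φ p.1 : ℤ) - (φ p.2 : ℤ)).natAbs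

/-- The radio number of `G`: the minimum span over all radio labelings. -/
noncomputable def radioNumber {V : Type*} [Fintype V] (G : SimpleGraph V) : ℕ :=
  sInf {s | ∃ φ : V → ℕ, IsRadioLabeling G φ ∧ labelSpan φ = s}

/-! Order the vertices `x₀, …, x_{N-1}` by increasing label. The radio condition bounds each gap
`φ x_{i+1} - φ x_i` below by `diam + 1 - d(x_i, x_{i+1})`, so the span is at least
`(N - 1)(diam + 1) - ∑ d(x_i, x_{i+1})`. If `2 d(u, v) ≤ w u + w v` for a weight `w`, then,
since every vertex lies in at most two consecutive pairs, the two ends in only one, and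
`w x₀ + w x_{N-1} ≥ 2 d(x₀, x_{N-1}) ≥ 2`, we get `∑ d(x_i, x_{i+1}) ≤ ∑ w - 1`. In `M(P_n)`, with `N = 2n - 1` and
`diam ≥ n`, the weight `w v = |v - (n - 1)| + [v is a vertex of P_n]` has `∑ w = n²`, and the span is at least
`(2n - 2)(n + 1) - (n² - 1) = n² - 1`. -/

open Finset

theorem Fin.sum_succ_sub_castSucc {M : Type*} [AddCommGroup M] {m : ℕ} (f : Fin (m + 1) → M) :
    ∑ i : Fin m, (f i.succ - f i.castSucc) = f (Fin.last m) - f 0 := by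
  rw [sum_sub_distrib, sub_eq_sub_iff_add_eq_add, add_comm, ← Fin.sum_univ_succ,
    Fin.sum_univ_castSucc, add_comm]

theorem exists_equiv_fin_strictMono {V α : Type*} [Fintype V] [LinearOrder α] {n : ℕ}
    (hn : Fintype.card V = n) {f : V → α} (hf : Function.Injective f) :
    ∃ e : Fin n ≃ V, StrictMono (f ∘ e) := by
  set e₀ := (Fintype.equivFinOfCardEq hn).symm
  refine ⟨(Tuple.sort (f ∘ e₀)).trans e₀, ?_⟩
  exact (Tuple.monotone_sort (f ∘ e₀)).strictMono_of_injective
    (hf.comp (e₀.injective.comp (Tuple.sort _).injective))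

namespace SimpleGraph

variable {V : Type*} {G : SimpleGraph V}

theorem Walk.le_add_length {f : V → ℕ} (hf : ∀ u v, G.Adj u v → f v ≤ f u + 1) :
    ∀ {u v : V} (p : G.Walk u v), f v ≤ f u + p.length
  | _, _, .nil => le_rfl
  | _, _, .cons h p => by
    have := hf _ _ h
    have := p.le_add_length hf
    rw [Walk.length_cons]
    omega

theorem Reachable.le_add_dist {f : V → ℕ} (hf : ∀ u v, G.Adj u v → f v ≤ f u + 1) {u v : V}
    (h : G.Reachable u v) : f v ≤ f u + G.dist u v := by
  obtain ⟨p, hp⟩ := h.exists_walk_length_eq_dist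
  exact hp ▸ p.le_add_length hf

theorem Connected.dist_le_diam [Finite V] (hG : G.Connected) (u v : V) : G.dist u v ≤ G.diam :=
  have : Nonempty V := hG.nonempty
  G.dist_le_diam (G.connected_iff_ediam_ne_top.mp hG)

theorem Connected.sum_dist_castSucc_succ_lt [Fintype V] (hG : G.Connected) {w : V → ℕ}
    (hw : ∀ u v, 2 * G.dist u v ≤ w u + w v) {m : ℕ} (e : Fin (m + 2) ≃ V) :
    ∑ i : Fin (m + 1), G.dist (e i.castSucc) (e i.succ) < ∑ v, w v := by
  have hends : 2 ≤ w (e 0) + w (e (Fin.last _)) := by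
    have := hG.pos_dist_of_ne (e.injective.ne (Fin.last_pos.ne : (0 : Fin (m + 2)) ≠ _))
    have := hw (e 0) (e (Fin.last _))
    omega
  have hpairs : 2 * ∑ i : Fin (m + 1), G.dist (e i.castSucc) (e i.succ) ≤
      ∑ i : Fin (m + 1), w (e i.castSucc) + ∑ i : Fin (m + 1), w (e i.succ) := by
    rw [mul_sum, ← sum_add_distrib]
    exact sum_le_sum fun i _ ↦ hw _ _
  have hfirst : ∑ v, w v = w (e 0) + ∑ i : Fin (m + 1), w (e i.succ) := by
    rw [← e.sum_comp, Fin.sum_univ_succ]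
  have hlast : ∑ v, w v = ∑ i : Fin (m + 1), w (e i.castSucc) + w (e (Fin.last _)) := by
    rw [← e.sum_comp, Fin.sum_univ_castSucc]
  omega

end SimpleGraph

section RadioLabeling

variable {V : Type*} {G : SimpleGraph V} {φ : V → ℕ}

theorem IsRadioLabeling.injective [Finite V] (hφ : IsRadioLabeling G φ) (hG : G.Connected) :
    Function.Injective φ := by
  intro u v huv
  by_contra hne
  have hd := hG.dist_le_diam u v
  have := hφ u v hne
  rw [huv, sub_self, abs_zero] at this
  omega

theorem exists_isRadioLabeling [Finite V] (G : SimpleGraph V) : ∃ φ, IsRadioLabeling G φ := by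
  obtain ⟨N, ⟨e⟩⟩ := Finite.exists_equiv_fin V
  refine ⟨fun v ↦ e v * (G.diam + 1), fun u v huv ↦ ?_⟩
  have hne : ((e u : ℕ) : ℤ) - (e v : ℕ) ≠ 0 := by
    simpa [sub_eq_zero, Fin.val_inj] using huv
  push_cast
  rw [← sub_mul, abs_mul, abs_of_pos (by positivity : (0 : ℤ) < G.diam + 1)]
  nlinarith [Int.one_le_abs hne]

theorem exists_labelSpan_eq_radioNumber [Fintype V] (G : SimpleGraph V) :
    ∃ φ, IsRadioLabeling G φ ∧ labelSpan φ = radioNumber G := by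
  obtain ⟨φ, hφ⟩ := exists_isRadioLabeling G
  exact Nat.sInf_mem (s := {s | ∃ φ, IsRadioLabeling G φ ∧ labelSpan φ = s}) ⟨_, φ, hφ, rfl⟩

theorem sub_le_labelSpan [Fintype V] (φ : V → ℕ) (u v : V) :
    (φ u : ℤ) - φ v ≤ labelSpan φ :=
  Int.le_natAbs.trans <| Int.ofNat_le.mpr <|
    le_sup (f := fun p : V × V ↦ ((φ p.1 : ℤ) - φ p.2).natAbs) (mem_univ (u, v))

theorem IsRadioLabeling.mul_diam_add_one_le [Fintype V] (hφ : IsRadioLabeling G φ) {m : ℕ}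
    (e : Fin (m + 1) ≃ V) (he : Monotone (φ ∘ e)) :
    m * (G.diam + 1) ≤ labelSpan φ + ∑ i : Fin m, G.dist (e i.castSucc) (e i.succ) := by
  have hgap (i : Fin m) : (G.diam : ℤ) + 1 ≤
      G.dist (e i.castSucc) (e i.succ) + ((φ (e i.succ) : ℤ) - φ (e i.castSucc)) := by
    have hle : (φ (e i.castSucc) : ℤ) ≤ φ (e i.succ) := by
      exact_mod_cast he i.castSucc_lt_succ.le
    have := hφ _ _ (e.injective.ne i.castSucc_lt_succ.ne)
    rwa [abs_sub_comm, abs_of_nonneg (sub_nonneg.mpr hle)] at this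
  have hsum : (m : ℤ) * (G.diam + 1) ≤ ∑ i : Fin m, (G.dist (e i.castSucc) (e i.succ) : ℤ) +
      ((φ (e (Fin.last m)) : ℤ) - φ (e 0)) := by
    rw [← Fin.sum_succ_sub_castSucc (fun j ↦ (φ (e j) : ℤ)), ← sum_add_distrib]
    simpa using sum_le_sum fun i (_ : i ∈ univ) ↦ hgap i
  have hspan := sub_le_labelSpan φ (e (Fin.last m)) (e 0)
  zify
  linarith

theorem SimpleGraph.Connected.card_sub_one_mul_lt_radioNumber_add [Fintype V] (hG : G.Connected)
    (hV : 2 ≤ Fintype.card V) {w : V → ℕ} (hw : ∀ u v, 2 * G.dist u v ≤ w u + w v) :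
    (Fintype.card V - 1) * (G.diam + 1) < radioNumber G + ∑ v, w v := by
  obtain ⟨m, hm⟩ : ∃ m, Fintype.card V = m + 2 := ⟨Fintype.card V - 2, by omega⟩
  obtain ⟨φ, hφ, hspan⟩ := exists_labelSpan_eq_radioNumber G
  obtain ⟨e, he⟩ := exists_equiv_fin_strictMono hm (hφ.injective hG)
  have hgaps := hφ.mul_diam_add_one_le e he.monotone
  have hdists := hG.sum_dist_castSucc_succ_lt hw e
  rw [hm, ← hspan, show m + 2 - 1 = m + 1 by omega]
  omega

end RadioLabeling

section MiddlePath

variable {n : ℕ}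

theorem middlePath_adj_of_add_one_eq {a b : Fin (2 * n - 1)} (h : (a : ℕ) + 1 = b) :
    (middlePath n).Adj a b :=
  Or.inl (Or.inl h)

theorem middlePath_adj_of_odd_add_two_eq {a b : Fin (2 * n - 1)} (ha : (a : ℕ) % 2 = 1)
    (h : (a : ℕ) + 2 = b) : (middlePath n).Adj a b :=
  Or.inr ⟨ha, by omega, Or.inl h⟩

theorem middlePath_connected (hn : 1 ≤ n) : (middlePath n).Connected := by
  have hzero (a : Fin (2 * n - 1)) : (middlePath n).Reachable ⟨0, by omega⟩ a := by
    obtain ⟨a, ha⟩ := a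
    induction a with
    | zero => rfl
    | succ a ih =>
      exact (ih (by omega)).trans (middlePath_adj_of_add_one_eq (b := ⟨a + 1, ha⟩) rfl).reachable
  exact (SimpleGraph.connected_iff _).mpr
    ⟨fun u v ↦ (hzero u).symm.trans (hzero v), ⟨⟨0, by omega⟩⟩⟩

theorem middlePath_two_mul_dist_le_of_le {a b : Fin (2 * n - 1)} (hab : (a : ℕ) ≤ b) :
    2 * (middlePath n).dist a b ≤ (b : ℕ) - a + (1 - (a : ℕ) % 2) + (1 - (b : ℕ) % 2) := by
  induction h : (b : ℕ) - a using Nat.strong_induction_on generalizing a with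
  | _ k ih =>
  rcases (show (a : ℕ) = b ∨ (a : ℕ) + 1 = b ∨ (a : ℕ) + 2 ≤ b by omega) with hab' | hab' | hab'
  · rw [Fin.ext hab', SimpleGraph.dist_self]
    omega
  · rw [SimpleGraph.dist_eq_one_iff_adj.mpr (middlePath_adj_of_add_one_eq hab')]
    omega
  · -- step towards `b`: to `a + 1` if `a` is even, along the path `v'_1 ⋯ v'_{n-1}` if odd
    obtain ⟨a', hadj, hstep⟩ : ∃ a' : Fin (2 * n - 1), (middlePath n).Adj a a' ∧
        (a' : ℕ) ≤ b ∧ 2 + ((b : ℕ) - a' + (1 - (a' : ℕ) % 2)) ≤ (b : ℕ) - a + (1 - (a : ℕ) % 2) ∧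
        (a : ℕ) < a' := by
      rcases Nat.mod_two_eq_zero_or_one a with ha | ha
      · exact ⟨⟨a + 1, by omega⟩, middlePath_adj_of_add_one_eq rfl, by simp only; omega⟩
      · exact ⟨⟨a + 2, by omega⟩, middlePath_adj_of_odd_add_two_eq ha rfl, by simp only; omega⟩
    have hrest := ih _ (by omega) hstep.1 rfl
    have htri := hadj.reachable.dist_triangle_left b
    rw [SimpleGraph.dist_eq_one_iff_adj.mpr hadj] at htri
    omega

/- Even indices (the vertices of `P_n`) pay an extra half step to reach the path
`v'_1 ⋯ v'_{n-1}`, along which an index step of two costs one. -/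
def middlePathWeight (n v : ℕ) : ℕ :=
  Nat.dist v (n - 1) + (1 - v % 2)

theorem middlePath_two_mul_dist_le (a b : Fin (2 * n - 1)) :
    2 * (middlePath n).dist a b ≤ middlePathWeight n a + middlePathWeight n b := by
  unfold middlePathWeight Nat.dist
  rcases le_total (a : ℕ) b with hab | hab
  · have := middlePath_two_mul_dist_le_of_le hab
    omega
  · have := middlePath_two_mul_dist_le_of_le hab
    rw [SimpleGraph.dist_comm] at this
    omega

theorem sum_range_dist_center (c : ℕ) : ∑ v ∈ range (2 * c + 1), Nat.dist v c = c * (c + 1) := by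
  induction c with
  | zero => simp
  | succ c ih =>
    rw [show 2 * (c + 1) + 1 = 2 * c + 1 + 1 + 1 by ring, sum_range_succ', sum_range_succ]
    simp only [Nat.dist, Nat.add_sub_add_right] at ih ⊢
    rw [ih]
    ring_nf
    omega

theorem sum_range_one_sub_mod_two (M : ℕ) : ∑ v ∈ range M, (1 - v % 2) = (M + 1) / 2 := by
  induction M with
  | zero => simp
  | succ M ih =>
    rw [sum_range_succ, ih]
    omega

theorem sum_middlePathWeight (hn : 1 ≤ n) :
    ∑ v : Fin (2 * n - 1), middlePathWeight n v = n ^ 2 := by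
  obtain ⟨c, rfl⟩ : ∃ c, n = c + 1 := ⟨n - 1, by omega⟩
  rw [Fin.sum_univ_eq_sum_range (middlePathWeight (c + 1)),
    show 2 * (c + 1) - 1 = 2 * c + 1 by omega]
  simp only [middlePathWeight, Nat.add_sub_cancel, sum_add_distrib, sum_range_dist_center,
    sum_range_one_sub_mod_two]
  rw [show (2 * c + 1 + 1) / 2 = c + 1 by omega]
  ring

theorem middlePath_le_diam (hn : 2 ≤ n) : n ≤ (middlePath n).diam := by
  set first : Fin (2 * n - 1) := ⟨0, by omega⟩
  set last : Fin (2 * n - 1) := ⟨2 * n - 2, by omega⟩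
  -- `f v` is the distance from `first` to `v`
  set f : Fin (2 * n - 1) → ℕ := fun v ↦ if (v : ℕ) = 0 then 0 else v / 2 + 1
  have hf (u v : Fin (2 * n - 1)) (huv : (middlePath n).Adj u v) : f v ≤ f u + 1 := by
    simp only [middlePath, f] at huv ⊢
    split_ifs <;> omega
  have hconn := middlePath_connected (n := n) (by omega)
  have hdist := (hconn first last).le_add_dist hf
  have hlast : f last = n := by simp only [f, last]; split_ifs <;> omega
  have hfirst : f first = 0 := by simp [f, first]
  have hdiam := hconn.dist_le_diam first last
  omega

theorem middlePath_sq_sub_one_le_radioNumber (hn : 2 ≤ n) :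
    n ^ 2 - 1 ≤ radioNumber (middlePath n) := by
  have key := (middlePath_connected (n := n) (by omega)).card_sub_one_mul_lt_radioNumber_add
    (by simp only [Fintype.card_fin]; omega) middlePath_two_mul_dist_le
  rw [Fintype.card_fin, sum_middlePathWeight (by omega)] at key
  have hdiam := Nat.mul_le_mul_left (2 * n - 1 - 1) (Nat.succ_le_succ (middlePath_le_diam hn))
  obtain ⟨p, rfl⟩ : ∃ p, n = p + 2 := ⟨n - 2, by omega⟩
  rw [show 2 * (p + 2) - 1 - 1 = 2 * p + 2 by omega] at key hdiam
  rw [show (p + 2) ^ 2 - 1 = p ^ 2 + 4 * p + 3 by ring_nf; omega]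
  nlinarith

end MiddlePath

/-- For every `k ≥ 1`, the radio number of the middle graph of the path `P (2k)`
is at least `4k² - 1`, and the radio number of the middle graph of `P (2k+1)` is
at least `4k(k+1)`. -/
theorem radioNumber_middlePath_lower (k : ℕ) (hk : 1 ≤ k) :
    4 * k ^ 2 - 1 ≤ radioNumber (middlePath (2 * k)) ∧
    4 * k * (k + 1) ≤ radioNumber (middlePath (2 * k + 1)) := by
  constructor
  · have := middlePath_sq_sub_one_le_radioNumber (n := 2 * k) (by omega)
    rwa [mul_pow, show 2 ^ 2 = 4 by rfl] at this
  · have := middlePath_sq_sub_one_le_radioNumber (n := 2 * k + 1) (by omega)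
    rwa [show (2 * k + 1) ^ 2 - 1 = 4 * k * (k + 1) by ring_nf; omega] at this
end

section
/- Let n ≥ 2, let d = diam(M(P_n)) and k = ⌊n/2⌋, and let p = 2n − 1 be the number of vertices of M(P_n). Let u_1, u_2, …, u_p be an ordering of all vertices of M(P_n) and let φ be defined by φ(u_1) = 0 and φ(u_{i+1}) = φ(u_i) + d + 1 − d(u_i, u_{i+1}) for 1 ≤ i ≤ p − 1. If d(u_i, u_{i+1}) ≤ k + 1 for every 1 ≤ i ≤ p − 1, then φ is a radio labeling of M(P_n). -/
/-!
A labeling built along an ordering `u₀, u₁, …` of the vertices of a graph of diameter `d`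
has consecutive gaps `d + 1 - d(uᵢ, uᵢ₊₁)`, which is at least `d - k` when consecutive
vertices are at distance at most `k + 1`. Consecutive vertices satisfy the radio condition
with equality; vertices two or more places apart have labels differing by at least
`2 (d - k) ≥ d`, which suffices as soon as `2k ≤ d`. For `M(Pₙ)` we have `d ≥ n ≥ 2 ⌊n/2⌋`:
the potential `⌈a/2⌉` on vertex indices, raised by one at the last vertex `vₙ`, changes by
at most one along each edge and goes from `0` at `v₁` to `n` at `vₙ`.
-/

lemma Fin.add_mul_le_of_add_le_succ {p c : ℕ} {f : Fin p → ℕ}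
    (hf : ∀ i j : Fin p, (j : ℕ) = i + 1 → f i + c ≤ f j) {i j : Fin p} (hij : i ≤ j) :
    f i + (j - i) * c ≤ f j := by
  obtain ⟨j, hj⟩ := j
  induction j, (show (i : ℕ) ≤ j from hij) using Nat.le_induction with
  | base => simp
  | succ m hm ih =>
    have hstep := hf ⟨m, by omega⟩ ⟨m + 1, hj⟩ rfl
    have hle := ih (by omega) hm
    dsimp only at hle ⊢
    rw [Nat.sub_add_comm hm, Nat.succ_mul]
    omega

namespace SimpleGraph

variable {V : Type*} {G : SimpleGraph V}

lemma Walk.le_add_length_s3 {f : V → ℤ} (hf : ∀ a b, G.Adj a b → f b ≤ f a + 1) {a b : V}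
    (w : G.Walk a b) : f b ≤ f a + w.length := by
  induction w with
  | nil => simp
  | cons hadj _ ih =>
    rw [Walk.length_cons]
    have := hf _ _ hadj
    push_cast
    omega

lemma Reachable.sub_le_dist {f : V → ℤ} (hf : ∀ a b, G.Adj a b → f b ≤ f a + 1) {a b : V}
    (hr : G.Reachable a b) : f b - f a ≤ G.dist a b := by
  obtain ⟨w, hw⟩ := hr.exists_walk_length_eq_dist
  have := w.le_add_length_s3 hf
  omega

variable {p k : ℕ} {u : Fin p → V} {φ : V → ℕ}

lemma add_diam_sub_le_of_succ
    (hstep : ∀ i j : Fin p, (j : ℕ) = i + 1 →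
      φ (u j) = φ (u i) + (G.diam + 1 - G.dist (u i) (u j)))
    (hdist : ∀ i j : Fin p, (j : ℕ) = i + 1 → G.dist (u i) (u j) ≤ k + 1)
    {i j : Fin p} (hij : (j : ℕ) = i + 1) : φ (u i) + (G.diam - k) ≤ φ (u j) := by
  have := hstep i j hij
  have := hdist i j hij
  omega

lemma diam_add_one_le_of_lt (hG : G.Preconnected) (hk : 2 * k ≤ G.diam)
    (hstep : ∀ i j : Fin p, (j : ℕ) = i + 1 →
      φ (u j) = φ (u i) + (G.diam + 1 - G.dist (u i) (u j)))
    (hdist : ∀ i j : Fin p, (j : ℕ) = i + 1 → G.dist (u i) (u j) ≤ k + 1)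
    {i j : Fin p} (hij : i < j) (hne : u i ≠ u j) :
    (G.diam : ℤ) + 1 ≤ G.dist (u i) (u j) + |(φ (u i) : ℤ) - φ (u j)| := by
  have hgap : φ (u i) + (j - i) * (G.diam - k) ≤ φ (u j) :=
    Fin.add_mul_le_of_add_le_succ (fun _ _ h ↦ add_diam_sub_le_of_succ hstep hdist h) hij.le
  suffices (G.diam : ℤ) + 1 ≤ G.dist (u i) (u j) + ((φ (u j) : ℤ) - φ (u i)) by
    rw [abs_sub_comm]
    exact this.trans (by gcongr; exact le_abs_self _)
  by_cases hsucc : (j : ℕ) = i + 1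
  · have := hstep i j hsucc
    have := hdist i j hsucc
    omega
  · have := Nat.mul_le_mul_right (G.diam - k) (show 2 ≤ (j : ℕ) - i by omega)
    have := (hG _ _).pos_dist_of_ne hne
    omega

theorem isRadioLabeling_of_consecutive (hG : G.Preconnected) (hk : 2 * k ≤ G.diam)
    (hu : Function.Surjective u)
    (hstep : ∀ i j : Fin p, (j : ℕ) = i + 1 →
      φ (u j) = φ (u i) + (G.diam + 1 - G.dist (u i) (u j)))
    (hdist : ∀ i j : Fin p, (j : ℕ) = i + 1 → G.dist (u i) (u j) ≤ k + 1) :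
    IsRadioLabeling G φ := by
  intro x y hxy
  obtain ⟨i, rfl⟩ := hu x
  obtain ⟨j, rfl⟩ := hu y
  rcases lt_or_gt_of_ne (ne_of_apply_ne u hxy) with hij | hij
  · exact diam_add_one_le_of_lt hG hk hstep hdist hij hxy
  · rw [dist_comm, abs_sub_comm]
    exact diam_add_one_le_of_lt hG hk hstep hdist hij hxy.symm

end SimpleGraph

open SimpleGraph

lemma pathGraph_le_middlePath (n : ℕ) : pathGraph (2 * n - 1) ≤ middlePath n :=
  fun _ _ h ↦ Or.inl (pathGraph_adj.mp h)

lemma middlePath_preconnected (n : ℕ) : (middlePath n).Preconnected :=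
  (pathGraph_preconnected _).mono (pathGraph_le_middlePath n)

lemma le_diam_middlePath {n : ℕ} (hn : 2 ≤ n) : n ≤ (middlePath n).diam := by
  let first : Fin (2 * n - 1) := ⟨0, by omega⟩
  let last : Fin (2 * n - 1) := ⟨2 * n - 2, by omega⟩
  let height (a : Fin (2 * n - 1)) : ℤ :=
    ((a : ℕ) + 1) / 2 + if (a : ℕ) = 2 * n - 2 then 1 else 0
  have hheight : ∀ a b, (middlePath n).Adj a b → height b ≤ height a + 1 := by
    intro a b hab
    rcases hab with (h | h) | ⟨ha, hb, h | h⟩ <;> simp only [height] <;> split_ifs <;> omega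
  have : Nonempty (Fin (2 * n - 1)) := ⟨first⟩
  have hdiam := connected_iff_ediam_ne_top.mp ⟨middlePath_preconnected n⟩
  have hends : height last - height first = n := by
    simp only [height, first, last]
    split_ifs <;> omega
  have := ((middlePath_preconnected n) first last).sub_le_dist hheight
  have := dist_le_diam hdiam (u := first) (v := last)
  omega

/-- Let `u 0, u 1, …, u (p-1)` be an ordering of all `p = 2n - 1` vertices of
`M(P n)` and let `φ` be defined by `φ (u 0) = 0` and
`φ (u (i+1)) = φ (u i) + diam + 1 - d(u i, u (i+1))`.  If `d(u i, u (i+1)) ≤ k + 1`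
for every `i`, where `k = ⌊n/2⌋`, then `φ` is a radio labeling of `M(P n)`. -/
theorem isRadioLabeling_of_consecutive_dist_le (n : ℕ) (hn : 2 ≤ n)
    (u : Fin (2 * n - 1) → Fin (2 * n - 1)) (hu : Function.Bijective u)
    (φ : Fin (2 * n - 1) → ℕ)
    (hstep : ∀ i j : Fin (2 * n - 1), (j : ℕ) = (i : ℕ) + 1 →
      φ (u j) = φ (u i) + ((middlePath n).diam + 1 - (middlePath n).dist (u i) (u j)))
    (hdist : ∀ i j : Fin (2 * n - 1), (j : ℕ) = (i : ℕ) + 1 →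
      (middlePath n).dist (u i) (u j) ≤ n / 2 + 1) :
    IsRadioLabeling (middlePath n) φ :=
  isRadioLabeling_of_consecutive (middlePath_preconnected n)
    ((Nat.mul_div_le n 2).trans (le_diam_middlePath hn)) hu.surjective hstep hdist
end
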